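/- arXiv:1308.0933 — 3 statements merged into one kernel-verified Lean document; each statement's English description precedes it below -/
import Mathlib

section
/- Let η > 0 and let (K_s) be positive integers with K_s/√s → η. For each positive integer s let π^{(s)} be the stationary distribution of the M/M/s/K_s queue with ρ = 1. Then √s · π^{(s)}_s → 1/(√(π/2) + η) as s → ∞. -/
open Filter Real

/-- Unnormalized stationary weights of the M/M/s/K queue with traffic intensity ρ. -/
noncomputable def statw (s : ℕ) (ρ : ℝ) (i : ℕ) : ℝ :=
  if i ≤ s then (s * ρ) ^ i / (Nat.factorial i) else ρ ^ (i - s) * (s * ρ) ^ s / (Nat.factorial s)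

/-- Stationary distribution of the M/M/s/K queue on `{0,…,s+K}`. -/
noncomputable def statPi (s K : ℕ) (ρ : ℝ) (i : ℕ) : ℝ :=
  statw s ρ i / ∑ j ∈ Finset.range (s + K + 1), statw s ρ j

/-!
With `Q(s) = s! / s ^ s * ∑_{j ≤ s} s ^ j / j!`, one has `√s π_s = 1 / (Q(s) / √s + K_s / √s)`,
so everything reduces to `Q(n) / √n → √(π / 2)`. Since `∑_{j ≤ n} n ^ j / j!` is `eⁿ` times the
upper incomplete Gamma ratio `1 - (∫₀ⁿ tⁿ e⁻ᵗ dt) / n!`,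
`Q(n) / √n = n! eⁿ / (nⁿ √n) - (∫₀ⁿ tⁿ e⁻ᵗ dt) / (nⁿ e⁻ⁿ √n)`.
The first term tends to `√(2π)` by Stirling. In the second, substituting `t = n - √n v` gives
`∫₀^√n (1 - v/√n)ⁿ e^{√n v} dv`, whose integrand tends to `e^{-v²/2}` and is dominated by it
because `log (1 - y) ≤ -y - y²/2`; so it tends to `√(π / 2)`.
-/

open MeasureTheory Set Topology Stirling
open scoped Nat

lemma add_sq_div_two_le_neg_log_one_sub {y : ℝ} (h₀ : 0 ≤ y) (h₁ : y < 1) :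
    y + y ^ 2 / 2 ≤ -log (1 - y) :=
  calc y + y ^ 2 / 2 = ∑ i ∈ Finset.range 2, y ^ (i + 1) / (i + 1) := by
        norm_num [Finset.sum_range_succ]
    _ ≤ -log (1 - y) := sum_le_hasSum _ (fun i _ => by positivity)
        (hasSum_pow_div_log_of_abs_lt_one (by rwa [abs_of_nonneg h₀]))

lemma abs_log_one_sub_add_le {y : ℝ} (h : |y| < 1) :
    |log (1 - y) + y + y ^ 2 / 2| ≤ |y| ^ 3 / (1 - |y|) := by
  convert abs_log_sub_add_sum_range_le h 2 using 2
  simp only [Finset.sum_range_succ, Finset.sum_range_zero]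
  ring

lemma abs_sq_mul_log_one_sub_div_add_le {r v : ℝ} (hv : 0 < v) (hvr : v < r) :
    |r ^ 2 * log (1 - v / r) + r * v + v ^ 2 / 2| ≤ v ^ 3 / (r - v) := by
  have hr : 0 < r := hv.trans hvr
  have hy : 0 < v / r := by positivity
  calc |r ^ 2 * log (1 - v / r) + r * v + v ^ 2 / 2|
      = |r ^ 2 * (log (1 - v / r) + v / r + (v / r) ^ 2 / 2)| := by
        congr 1; field_simp
    _ = r ^ 2 * |log (1 - v / r) + v / r + (v / r) ^ 2 / 2| := by
        rw [abs_mul, abs_of_pos (by positivity)]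
    _ ≤ r ^ 2 * ((v / r) ^ 3 / (1 - v / r)) := by
        gcongr
        simpa [abs_of_pos hy] using abs_log_one_sub_add_le (y := v / r)
          (by rwa [abs_of_pos hy, div_lt_one hr])
    _ = v ^ 3 / (r - v) := by field_simp

lemma mul_div_sqrt_natCast (n : ℕ) (v : ℝ) : n * (v / √n) = √n * v := by
  rw [mul_div_left_comm, div_sqrt, mul_comm]

lemma tendsto_sqrt_natCast_atTop : Tendsto (fun n : ℕ => √n) atTop atTop :=
  tendsto_sqrt_atTop.comp tendsto_natCast_atTop_atTop

lemma tendsto_mul_log_one_sub_div_sqrt {v : ℝ} (hv : 0 < v) :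
    Tendsto (fun n : ℕ => n * log (1 - v / √n) + √n * v) atTop (𝓝 (-(v ^ 2 / 2))) := by
  have hgap : Tendsto (fun n : ℕ => √n - v) atTop atTop :=
    tendsto_atTop_add_const_right _ _ tendsto_sqrt_natCast_atTop
  have hbound : Tendsto (fun n : ℕ => v ^ 3 / (√n - v)) atTop (𝓝 0) := by
    simpa [div_eq_mul_inv] using hgap.inv_tendsto_atTop.const_mul (v ^ 3)
  rw [← tendsto_sub_nhds_zero_iff]
  refine squeeze_zero_norm' ?_ hbound
  filter_upwards [tendsto_sqrt_natCast_atTop.eventually_gt_atTop v] with n hvn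
  rw [Real.norm_eq_abs, sub_neg_eq_add]
  simpa only [sq_sqrt n.cast_nonneg] using abs_sq_mul_log_one_sub_div_add_le hv hvn

lemma integral_exp_neg_sq_div_two_Ioi : ∫ v in Ioi (0 : ℝ), exp (-(v ^ 2 / 2)) = √(π / 2) := by
  have h := integral_gaussian_Ioi (1 / 2)
  rw [show π / (1 / 2) = 2 ^ 2 * (π / 2) by ring, sqrt_mul (by positivity), sqrt_sq zero_le_two,
    mul_div_cancel_left₀ _ two_ne_zero] at h
  simpa only [neg_mul, one_div, inv_mul_eq_div] using h

/-- `t ^ n * exp (-t)` at `t = n - √n * v`, divided by its maximum `n ^ n * exp (-n)`, and cut off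
at `v = √n`, i.e. `t = 0`. -/
noncomputable def rescaledGammaKernel (n : ℕ) (v : ℝ) : ℝ :=
  (Iio √n).indicator (fun v => (1 - v / √n) ^ n * exp (√n * v)) v

lemma rescaledGammaKernel_eq_exp {n : ℕ} {v : ℝ} (hv : 0 < v) (hvn : v < √n) :
    rescaledGammaKernel n v = exp (n * log (1 - v / √n) + √n * v) := by
  have hn : 0 < √n := hv.trans hvn
  have hy : 0 < 1 - v / √n := by rw [sub_pos, div_lt_one hn]; exact hvn
  rw [rescaledGammaKernel, indicator_of_mem (mem_Iio.2 hvn), exp_add, ← log_pow,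
    exp_log (by positivity)]

lemma rescaledGammaKernel_nonneg (n : ℕ) {v : ℝ} (hv : 0 < v) : 0 ≤ rescaledGammaKernel n v := by
  by_cases hvn : v < √n
  · rw [rescaledGammaKernel_eq_exp hv hvn]; positivity
  · rw [rescaledGammaKernel, indicator_of_notMem (notMem_Iio.2 (not_lt.1 hvn))]

lemma rescaledGammaKernel_le (n : ℕ) {v : ℝ} (hv : 0 < v) :
    rescaledGammaKernel n v ≤ exp (-(v ^ 2 / 2)) := by
  by_cases hvn : v < √n
  · have hn : 0 < √n := hv.trans hvn
    have hy : v / √n < 1 := by rwa [div_lt_one hn]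
    have hlog := add_sq_div_two_le_neg_log_one_sub (by positivity) hy
    have hsq : n * (v / √n) ^ 2 = v ^ 2 := by
      rw [div_pow, sq_sqrt n.cast_nonneg, mul_div_cancel₀ _ (sqrt_pos.1 hn).ne']
    rw [rescaledGammaKernel_eq_exp hv hvn, exp_le_exp]
    nlinarith [mul_div_sqrt_natCast n v, (n.cast_nonneg : (0 : ℝ) ≤ n)]
  · rw [rescaledGammaKernel, indicator_of_notMem (notMem_Iio.2 (not_lt.1 hvn))]; positivity

lemma tendsto_rescaledGammaKernel {v : ℝ} (hv : 0 < v) :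
    Tendsto (fun n => rescaledGammaKernel n v) atTop (𝓝 (exp (-(v ^ 2 / 2)))) := by
  refine ((continuous_exp.tendsto _).comp (tendsto_mul_log_one_sub_div_sqrt hv)).congr' ?_
  filter_upwards [tendsto_sqrt_natCast_atTop.eventually_gt_atTop v] with n hvn
  exact (rescaledGammaKernel_eq_exp hv hvn).symm

lemma tendsto_integral_rescaledGammaKernel :
    Tendsto (fun n => ∫ v in Ioi 0, rescaledGammaKernel n v) atTop (𝓝 √(π / 2)) := by
  rw [← integral_exp_neg_sq_div_two_Ioi]
  refine tendsto_integral_of_dominated_convergence (fun v => exp (-(v ^ 2 / 2)))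
    (fun n => ?_) ?_ (fun n => ?_) ?_
  · refine (Continuous.aestronglyMeasurable ?_).indicator measurableSet_Iio
    fun_prop
  · refine Integrable.integrableOn ?_
    simpa [div_eq_inv_mul] using integrable_exp_neg_mul_sq (b := 1 / 2) (by norm_num)
  · refine ae_restrict_of_forall_mem measurableSet_Ioi fun v hv => ?_
    rw [norm_of_nonneg (rescaledGammaKernel_nonneg n hv)]
    exact rescaledGammaKernel_le n hv
  · exact ae_restrict_of_forall_mem measurableSet_Ioi fun v hv => tendsto_rescaledGammaKernel hv

lemma hasDerivAt_sum_range_pow_div_factorial (n : ℕ) (t : ℝ) :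
    HasDerivAt (fun t : ℝ => ∑ i ∈ Finset.range (n + 1), t ^ i / i !)
      (∑ i ∈ Finset.range n, t ^ i / i !) t := by
  induction n with
  | zero => simpa using hasDerivAt_const t (1 : ℝ)
  | succ n ih =>
    simp only [Finset.sum_range_succ _ (n + 1)]
    refine (ih.add ((hasDerivAt_pow (n + 1) t).div_const ((n + 1) ! : ℝ))).congr_deriv ?_
    rw [Finset.sum_range_succ, Nat.factorial_succ]
    push_cast
    field_simp

lemma integral_pow_mul_exp_neg (n : ℕ) (x : ℝ) :
    ∫ t in 0..x, t ^ n * exp (-t)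
      = n ! * (1 - exp (-x) * ∑ i ∈ Finset.range (n + 1), x ^ i / i !) := by
  have hderiv (t : ℝ) : HasDerivAt
      (fun t : ℝ => -(n ! * (exp (-t) * ∑ i ∈ Finset.range (n + 1), t ^ i / i !)))
      (t ^ n * exp (-t)) t := by
    refine ((((hasDerivAt_neg t).exp.mul (hasDerivAt_sum_range_pow_div_factorial n t)).const_mul
      (n ! : ℝ)).neg).congr_deriv ?_
    rw [Finset.sum_range_succ]
    field_simp
    ring
  rw [intervalIntegral.integral_eq_sub_of_hasDerivAt (fun t _ => hderiv t)
    (by apply Continuous.intervalIntegrable; fun_prop)]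
  simp [Finset.sum_range_succ', neg_add_eq_sub, mul_sub]

lemma integral_pow_mul_exp_neg_eq_integral_rescaledGammaKernel {n : ℕ} (hn : 0 < n) :
    ∫ t in 0..n, t ^ n * exp (-t)
      = √n * (n ^ n * exp (-n)) * ∫ v in Ioi 0, rescaledGammaKernel n v := by
  have hsqrt : 0 < √n := sqrt_pos.2 (by exact_mod_cast hn)
  have hsubst (v : ℝ) : (n - √n * v) ^ n * exp (-(n - √n * v))
      = n ^ n * exp (-n) * ((1 - v / √n) ^ n * exp (√n * v)) := by
    have hfactor : (n : ℝ) - √n * v = n * (1 - v / √n) := by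
      rw [mul_sub, mul_one, mul_div_sqrt_natCast]
    rw [neg_sub, exp_sub, hfactor, mul_pow, exp_neg]
    ring
  have hcomp := intervalIntegral.integral_comp_sub_mul (fun t => t ^ n * exp (-t)) hsqrt.ne' (n : ℝ)
    (a := 0) (b := √n)
  rw [mul_zero, sub_zero, mul_self_sqrt n.cast_nonneg, sub_self] at hcomp
  simp only [hsubst, intervalIntegral.integral_const_mul] at hcomp
  have hkernel : ∫ v in 0..√n, (1 - v / √n) ^ n * exp (√n * v)
      = ∫ v in Ioi 0, rescaledGammaKernel n v := by
    rw [intervalIntegral.integral_of_le hsqrt.le, integral_Ioc_eq_integral_Ioo, ← Ioi_inter_Iio]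
    simp only [rescaledGammaKernel]
    rw [setIntegral_indicator measurableSet_Iio]
  rw [← hkernel, mul_assoc, hcomp, smul_eq_mul, mul_inv_cancel_left₀ hsqrt.ne']

lemma sqrt_two_mul_stirlingSeq (n : ℕ) : √2 * stirlingSeq n = n ! * exp n / (n ^ n * √n) := by
  rw [stirlingSeq, sqrt_mul zero_le_two, div_pow, ← exp_one_pow, ← exp_nat_mul, mul_one]
  field_simp

/-- Ramanujan's `1 + Q(n) = ∑_{k ≤ n} n! / ((n - k)! n ^ k)`. -/
noncomputable def ramanujanSum (n : ℕ) : ℝ :=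
  n ! / n ^ n * ∑ j ∈ Finset.range (n + 1), (n : ℝ) ^ j / j !

lemma ramanujanSum_div_sqrt_eq {n : ℕ} (hn : 0 < n) :
    ramanujanSum n / √n = √2 * stirlingSeq n - ∫ v in Ioi 0, rescaledGammaKernel n v := by
  have hgamma := integral_pow_mul_exp_neg n n
  rw [integral_pow_mul_exp_neg_eq_integral_rescaledGammaKernel hn, exp_neg] at hgamma
  rw [ramanujanSum, sqrt_two_mul_stirlingSeq]
  field_simp at hgamma ⊢
  linear_combination hgamma

lemma sqrt_two_mul_sqrt_pi_sub : √2 * √π - √(π / 2) = √(π / 2) := by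
  rw [← sqrt_mul zero_le_two, show 2 * π = 2 ^ 2 * (π / 2) by ring, sqrt_mul (by positivity),
    sqrt_sq zero_le_two]
  ring

lemma tendsto_ramanujanSum_div_sqrt :
    Tendsto (fun n => ramanujanSum n / √n) atTop (𝓝 √(π / 2)) := by
  have hlim := (tendsto_stirlingSeq_sqrt_pi.const_mul √2).sub tendsto_integral_rescaledGammaKernel
  rw [sqrt_two_mul_sqrt_pi_sub] at hlim
  refine hlim.congr' ?_
  filter_upwards [eventually_gt_atTop 0] with n hn
  exact (ramanujanSum_div_sqrt_eq hn).symm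

lemma sum_range_statw_one (s K : ℕ) :
    ∑ j ∈ Finset.range (s + K + 1), statw s 1 j
      = ∑ j ∈ Finset.range (s + 1), (s : ℝ) ^ j / j ! + K * ((s : ℝ) ^ s / s !) := by
  rw [add_right_comm, Finset.sum_range_add]
  congr 1
  · refine Finset.sum_congr rfl fun j hj => ?_
    rw [statw, if_pos (Nat.lt_succ_iff.1 (Finset.mem_range.1 hj)), mul_one]
  · rw [Finset.sum_congr rfl fun i _ => ?_, Finset.sum_const, Finset.card_range, nsmul_eq_mul]
    rw [statw, if_neg (by omega), one_pow, one_mul, mul_one]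

lemma sqrt_mul_statPi_one_self (s K : ℕ) :
    √s * statPi s K 1 s = 1 / (ramanujanSum s / √s + K / √s) := by
  rw [statPi, sum_range_statw_one, statw, if_pos le_rfl, mul_one, ramanujanSum]
  field_simp

theorem pis_limit_rho_one_general (η : ℝ) (hη : 0 < η) (K : ℕ → ℕ)
    (hlim : Tendsto (fun s : ℕ => (K s : ℝ) / Real.sqrt s) atTop (nhds η)) :
    Tendsto (fun s : ℕ => Real.sqrt s * statPi s (K s) 1 s) atTop
      (nhds (1 / (Real.sqrt (Real.pi / 2) + η))) := by
  have hden := tendsto_ramanujanSum_div_sqrt.add hlim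
  simp only [sqrt_mul_statPi_one_self]
  exact tendsto_const_nhds.div hden (by positivity)

theorem pis_limit_rho_one (η : ℝ) (hη : 0 < η) (K : ℕ → ℕ) (hK : ∀ s, 0 < K s)
    (hlim : Tendsto (fun s : ℕ => (K s : ℝ) / Real.sqrt s) atTop (nhds η)) :
    Tendsto (fun s : ℕ => Real.sqrt s * statPi s (K s) 1 s) atTop
      (nhds (1 / (Real.sqrt (Real.pi / 2) + η))) :=
  pis_limit_rho_one_general η hη K hlim
end

section
/- The improper Riemann integral ∫_0^∞ e^{u²/2} Φ(−u)² du equals (log 2)/(2√(2π)). -/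
open Real

/-- Standard normal cumulative distribution function. -/
noncomputable def normalCDF (x : ℝ) : ℝ :=
  (Real.sqrt (2 * Real.pi))⁻¹ * ∫ v in Set.Iic x, Real.exp (-v ^ 2 / 2)

/-! Substituting `v = u t` gives `Φ(-u) = (2π)^(-1/2) ∫_{t > 1} u e^(-u²t²/2) dt`, so
`e^(u²/2) Φ(-u)²` is `(2π)⁻¹` times a double integral over `t, s > 1` of
`u² e^(-(s² + t² - 1) u²/2)`. By Tonelli the `u`-integral can be done first; it is the Gaussian
moment `√(2π)/2 · (s² + t² - 1)^(-3/2)`. The `s`-integral of this is `1/(t(t + 1))`, with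
antiderivative `s / ((t² - 1) √(s² + t² - 1))`, and `∫_{t > 1} dt/(t(t + 1)) = log 2`. -/

open Set MeasureTheory Filter Topology
open scoped ENNReal

theorem lintegral_Ioi_ofReal_of_hasDerivAt_of_nonneg {g g' : ℝ → ℝ} {a l : ℝ}
    (hderiv : ∀ x ∈ Ici a, HasDerivAt g (g' x) x) (g'pos : ∀ x ∈ Ioi a, 0 ≤ g' x)
    (hg : Tendsto g atTop (𝓝 l)) :
    ∫⁻ x in Ioi a, ENNReal.ofReal (g' x) = ENNReal.ofReal (l - g a) := by
  rw [← integral_Ioi_of_hasDerivAt_of_nonneg' hderiv g'pos hg]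
  exact (ofReal_integral_eq_lintegral_ofReal (integrableOn_Ioi_deriv_of_nonneg' hderiv g'pos hg)
    ((ae_restrict_iff' measurableSet_Ioi).2 (ae_of_all _ g'pos))).symm

theorem lintegral_lintegral_lintegral_rotate {α β γ : Type*} [MeasurableSpace α]
    [MeasurableSpace β] [MeasurableSpace γ] {μ : Measure α} {ν : Measure β} {ρ : Measure γ}
    [SFinite μ] [SFinite ν] [SFinite ρ] {f : α → β → γ → ℝ≥0∞}
    (hf : Measurable fun p : (α × β) × γ => f p.1.1 p.1.2 p.2) :
    ∫⁻ x, ∫⁻ y, ∫⁻ z, f x y z ∂ρ ∂ν ∂μ = ∫⁻ y, ∫⁻ z, ∫⁻ x, f x y z ∂μ ∂ρ ∂ν := by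
  rw [lintegral_lintegral_swap hf.lintegral_prod_right'.aemeasurable]
  refine lintegral_congr fun y => lintegral_lintegral_swap ?_
  exact (hf.comp (f := fun p : α × γ => ((p.1, y), p.2)) (by fun_prop)).aemeasurable

theorem integrable_exp_neg_sq_div_two : Integrable fun v : ℝ => exp (-v ^ 2 / 2) := by
  convert integrable_exp_neg_mul_sq one_half_pos using 3
  ring

theorem normalCDF_nonneg (x : ℝ) : 0 ≤ normalCDF x :=
  mul_nonneg (by positivity) (setIntegral_nonneg measurableSet_Iic fun v _ => (exp_pos _).le)

theorem monotone_normalCDF : Monotone normalCDF := fun _ _ hxy =>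
  mul_le_mul_of_nonneg_left (setIntegral_mono_set integrable_exp_neg_sq_div_two.integrableOn
    (ae_of_all _ fun v => (exp_pos _).le) (Iic_subset_Iic.2 hxy).eventuallyLE) (by positivity)

theorem integral_Iic_neg_exp_neg_sq_div_two {u : ℝ} (hu : 0 < u) :
    ∫ v in Iic (-u), exp (-v ^ 2 / 2) = ∫ t in Ioi 1, u * exp (-(u * t) ^ 2 / 2) := by
  have hneg := integral_comp_neg_Iic (-u) fun v => exp (-v ^ 2 / 2)
  have hscale := integral_comp_mul_left_Ioi (fun v => exp (-v ^ 2 / 2)) 1 hu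
  simp only [neg_neg, neg_sq, mul_one] at hneg hscale
  rw [hneg, integral_const_mul, hscale, smul_eq_mul, ← mul_assoc, mul_inv_cancel₀ hu.ne',
    one_mul]

theorem ofReal_normalCDF_neg {u : ℝ} (hu : 0 < u) :
    ENNReal.ofReal (normalCDF (-u)) =
      ENNReal.ofReal (√(2 * π))⁻¹ *
        ∫⁻ t in Ioi 1, ENNReal.ofReal (u * exp (-(u * t) ^ 2 / 2)) := by
  have hint : IntegrableOn (fun t => u * exp (-(u * t) ^ 2 / 2)) (Ioi 1) :=
    ((integrable_exp_neg_sq_div_two.comp_mul_left' hu.ne').const_mul u).integrableOn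
  rw [normalCDF, ENNReal.ofReal_mul (by positivity), integral_Iic_neg_exp_neg_sq_div_two hu,
    ofReal_integral_eq_lintegral_ofReal hint (ae_of_all _ fun t => by positivity)]

noncomputable def tailKernel (u t s : ℝ) : ℝ :=
  exp (u ^ 2 / 2) * (u * exp (-(u * t) ^ 2 / 2)) * (u * exp (-(u * s) ^ 2 / 2))

theorem ofReal_exp_mul_normalCDF_neg_sq {u : ℝ} (hu : 0 < u) :
    ENNReal.ofReal (exp (u ^ 2 / 2) * normalCDF (-u) ^ 2) =
      ENNReal.ofReal (2 * π)⁻¹ * ∫⁻ t in Ioi 1, ∫⁻ s in Ioi 1,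
        ENNReal.ofReal (tailKernel u t s) := by
  set g : ℝ → ℝ≥0∞ := fun t => ENNReal.ofReal (u * exp (-(u * t) ^ 2 / 2))
  have hg : Measurable g := by fun_prop
  have hconst : ENNReal.ofReal (√(2 * π))⁻¹ ^ 2 = ENNReal.ofReal (2 * π)⁻¹ := by
    rw [← ENNReal.ofReal_pow (by positivity), inv_pow, sq_sqrt (by positivity)]
  calc
    _ = ENNReal.ofReal (2 * π)⁻¹ * (ENNReal.ofReal (exp (u ^ 2 / 2)) *
          ((∫⁻ t in Ioi 1, g t) * ∫⁻ s in Ioi 1, g s)) := by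
      rw [ENNReal.ofReal_mul (exp_pos _).le, ENNReal.ofReal_pow (normalCDF_nonneg _),
        ofReal_normalCDF_neg hu, ← hconst]
      ring
    _ = _ := by
      rw [← lintegral_lintegral_mul hg.aemeasurable hg.aemeasurable,
        ← lintegral_const_mul' _ _ ENNReal.ofReal_ne_top]
      congr 1
      refine lintegral_congr fun t => ?_
      rw [← lintegral_const_mul' _ _ ENNReal.ofReal_ne_top]
      refine lintegral_congr fun s => ?_
      rw [tailKernel,
        ENNReal.ofReal_mul (p := exp (u ^ 2 / 2) * (u * exp (-(u * t) ^ 2 / 2))) (by positivity),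
        ENNReal.ofReal_mul (p := exp (u ^ 2 / 2)) (exp_pos _).le, mul_assoc]

theorem lintegral_Ioi_sq_mul_exp_neg_mul_sq_div_two {b : ℝ} (hb : 0 < b) :
    ∫⁻ x in Ioi 0, ENNReal.ofReal (x ^ 2 * exp (-b * x ^ 2 / 2)) =
      ENNReal.ofReal (√(2 * π) / 2 * (b * √b)⁻¹) := by
  have hrpow : (fun x : ℝ => x ^ 2 * exp (-b * x ^ 2 / 2)) =
      fun x => x ^ (2 : ℝ) * exp (-(b / 2) * x ^ (2 : ℝ)) := by
    ext x
    rw [rpow_two]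
    ring_nf
  have hint := integrableOn_rpow_mul_exp_neg_mul_rpow (by norm_num : (-1 : ℝ) < 2) two_pos
    (half_pos hb)
  rw [← ofReal_integral_eq_lintegral_ofReal (hrpow ▸ hint)
    (ae_of_all _ fun x => by positivity), hrpow,
    integral_rpow_mul_exp_neg_mul_rpow two_pos (by norm_num) (half_pos hb)]
  have hΓ : Gamma ((2 + 1) / 2) = √π / 2 := by
    rw [show (2 + 1) / 2 = (1 / 2 + 1 : ℝ) by norm_num, Gamma_add_one (by norm_num),
      Gamma_one_half_eq]
    ring
  have hpow : (b / 2) ^ (-(2 + 1) / 2 : ℝ) = (b / 2 * √(b / 2))⁻¹ := by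
    rw [show -(2 + 1) / 2 = -(1 + 1 / 2 : ℝ) by norm_num, rpow_neg (half_pos hb).le,
      rpow_add (half_pos hb), rpow_one, sqrt_eq_rpow]
  have : 0 < √b := sqrt_pos.2 hb
  rw [hΓ, hpow, sqrt_div hb.le, sqrt_mul zero_le_two]
  field_simp

theorem lintegral_Ioi_tailKernel {t s : ℝ} (ht : 1 < t) :
    ∫⁻ u in Ioi 0, ENNReal.ofReal (tailKernel u t s) =
      ENNReal.ofReal (√(2 * π) / 2) *
        ENNReal.ofReal (((s ^ 2 + (t ^ 2 - 1)) * √(s ^ 2 + (t ^ 2 - 1)))⁻¹) := by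
  have hb : 0 < s ^ 2 + (t ^ 2 - 1) := by nlinarith
  rw [← ENNReal.ofReal_mul (by positivity), ← lintegral_Ioi_sq_mul_exp_neg_mul_sq_div_two hb]
  refine lintegral_congr fun u => ?_
  have hexp : -(s ^ 2 + (t ^ 2 - 1)) * u ^ 2 / 2 =
      u ^ 2 / 2 + -(u * t) ^ 2 / 2 + -(u * s) ^ 2 / 2 := by
    ring
  rw [tailKernel, hexp, exp_add, exp_add]
  ring_nf

theorem hasDerivAt_div_sqrt_sq_add {a : ℝ} (ha : 0 < a) (s : ℝ) :
    HasDerivAt (fun s => s / √(s ^ 2 + a)) (a * ((s ^ 2 + a) * √(s ^ 2 + a))⁻¹) s := by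
  have hpos : 0 < s ^ 2 + a := by positivity
  have hsqrt := ((hasDerivAt_pow 2 s).add_const a).sqrt hpos.ne'
  refine ((hasDerivAt_id' s).div hsqrt (sqrt_pos.2 hpos).ne').congr_deriv ?_
  have h := sq_sqrt hpos.le
  have : 0 < √(s ^ 2 + a) := sqrt_pos.2 hpos
  field_simp
  rw [h]
  norm_num
  ring

theorem tendsto_div_sqrt_sq_add_atTop (a : ℝ) :
    Tendsto (fun s => s / √(s ^ 2 + a)) atTop (𝓝 1) := by
  have hlim : Tendsto (fun s : ℝ => (√(1 + a / s ^ 2))⁻¹) atTop (𝓝 (√(1 + 0))⁻¹) :=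
    (((tendsto_const_nhds.div_atTop (tendsto_pow_atTop two_ne_zero)).const_add 1).sqrt).inv₀
      (by norm_num)
  rw [add_zero, sqrt_one, inv_one] at hlim
  refine hlim.congr' ?_
  filter_upwards [eventually_gt_atTop 0] with s hs
  rw [show s ^ 2 + a = s ^ 2 * (1 + a / s ^ 2) by field_simp [hs.ne'], sqrt_mul (sq_nonneg s),
    sqrt_sq hs.le, div_mul_cancel_left₀ hs.ne']

theorem lintegral_Ioi_inv_mul_sqrt_sq_add {a : ℝ} (ha : 0 < a) (x₀ : ℝ) :
    ∫⁻ s in Ioi x₀, ENNReal.ofReal (((s ^ 2 + a) * √(s ^ 2 + a))⁻¹) =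
      ENNReal.ofReal ((1 - x₀ / √(x₀ ^ 2 + a)) / a) := by
  have hderiv (s : ℝ) :
      HasDerivAt (fun s => s / √(s ^ 2 + a) / a) ((s ^ 2 + a) * √(s ^ 2 + a))⁻¹ s := by
    refine ((hasDerivAt_div_sqrt_sq_add ha s).div_const a).congr_deriv ?_
    field_simp
  rw [lintegral_Ioi_ofReal_of_hasDerivAt_of_nonneg (fun s _ => hderiv s)
    (fun s _ => by positivity) ((tendsto_div_sqrt_sq_add_atTop a).div_const a), sub_div]

theorem lintegral_Ioi_inv_mul_add_one {x₀ : ℝ} (hx₀ : 0 < x₀) :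
    ∫⁻ t in Ioi x₀, ENNReal.ofReal ((t * (t + 1))⁻¹) = ENNReal.ofReal (log (1 + x₀⁻¹)) := by
  have hderiv (t : ℝ) (ht : t ∈ Ici x₀) :
      HasDerivAt (fun t => -log (1 + t⁻¹)) (t * (t + 1))⁻¹ t := by
    have ht0 : 0 < t := hx₀.trans_le ht
    refine (((hasDerivAt_inv ht0.ne').const_add 1).log (by positivity)).neg.congr_deriv ?_
    field_simp
  have hlim : Tendsto (fun t : ℝ => -log (1 + t⁻¹)) atTop (𝓝 (-log (1 + 0))) :=
    (((continuousAt_log (by norm_num)).tendsto).comp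
      (tendsto_inv_atTop_zero.const_add 1)).neg
  rw [add_zero, log_one, neg_zero] at hlim
  rw [lintegral_Ioi_ofReal_of_hasDerivAt_of_nonneg hderiv
    (fun t ht => by have : 0 < t := hx₀.trans ht; positivity) hlim, zero_sub, neg_neg]

theorem lintegral_tailKernel :
    ∫⁻ t in Ioi 1, ∫⁻ s in Ioi 1, ∫⁻ u in Ioi 0, ENNReal.ofReal (tailKernel u t s) =
      ENNReal.ofReal (√(2 * π) / 2 * log 2) := by
  calc
    _ = ∫⁻ t in Ioi 1, ENNReal.ofReal (√(2 * π) / 2) *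
          ∫⁻ s in Ioi 1, ENNReal.ofReal (((s ^ 2 + (t ^ 2 - 1)) * √(s ^ 2 + (t ^ 2 - 1)))⁻¹) := by
      refine setLIntegral_congr_fun measurableSet_Ioi fun t ht => ?_
      simp_rw [lintegral_Ioi_tailKernel ht]
      exact lintegral_const_mul' _ _ ENNReal.ofReal_ne_top
    _ = ENNReal.ofReal (√(2 * π) / 2) * ∫⁻ t in Ioi 1, ENNReal.ofReal ((t * (t + 1))⁻¹) := by
      rw [← lintegral_const_mul' _ _ ENNReal.ofReal_ne_top]
      refine setLIntegral_congr_fun measurableSet_Ioi fun t (ht : 1 < t) => ?_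
      rw [lintegral_Ioi_inv_mul_sqrt_sq_add (by nlinarith), one_pow,
        add_sub_cancel, sqrt_sq (by linarith)]
      congr 2
      have : t ^ 2 - 1 ≠ 0 := by nlinarith
      field_simp
      ring
    _ = _ := by
      rw [lintegral_Ioi_inv_mul_add_one one_pos, ← ENNReal.ofReal_mul (by positivity)]
      norm_num

theorem integral_J0 :
    ∫ u in Set.Ioi (0 : ℝ), Real.exp (u ^ 2 / 2) * normalCDF (-u) ^ 2
      = Real.log 2 / (2 * Real.sqrt (2 * Real.pi)) := by
  have hmeas : Measurable fun u : ℝ => exp (u ^ 2 / 2) * normalCDF (-u) ^ 2 := by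
    have := monotone_normalCDF.measurable
    fun_prop
  have hlint : ∫⁻ u in Ioi 0, ENNReal.ofReal (exp (u ^ 2 / 2) * normalCDF (-u) ^ 2) =
      ENNReal.ofReal ((2 * π)⁻¹ * (√(2 * π) / 2 * log 2)) := by
    have hK : Measurable fun p : (ℝ × ℝ) × ℝ => ENNReal.ofReal (tailKernel p.1.1 p.1.2 p.2) := by
      unfold tailKernel
      fun_prop
    rw [setLIntegral_congr_fun measurableSet_Ioi fun u hu => ofReal_exp_mul_normalCDF_neg_sq hu,
      lintegral_const_mul' _ _ ENNReal.ofReal_ne_top, lintegral_lintegral_lintegral_rotate hK,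
      lintegral_tailKernel, ← ENNReal.ofReal_mul (by positivity)]
  rw [integral_eq_lintegral_of_nonneg_ae (ae_of_all _ fun u => by positivity)
    hmeas.aestronglyMeasurable, hlint, ENNReal.toReal_ofReal (by positivity)]
  have := sq_sqrt (by positivity : (0 : ℝ) ≤ 2 * π)
  field_simp
  linear_combination this
end

section
/- There exist a constant C > 0 and an integer s₀ such that for all integers s ≥ s₀ and all integers i with 0 ≤ i ≤ s^{5/8}, the Poisson(s) probabilities satisfy |e^{i²/(2s)} · ϖ_{s−i}(s)/ϖ_s(s) − 1| ≤ C s^{−1/8}. (Equivalently, ϖ_{s−i}(s)/ϖ_s(s) = φ(i/√s)/φ(0) · (1 + O(s^{−1/8})) uniformly for 0 ≤ i ≤ s^{5/8}.) -/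
/-! For `i ≤ s` the ratio `ϖ_{s-i}(s) / ϖ_s(s)` is `∏_{j<i} (1 - j/s)`. Since
`log (1 - x) = -x + O(x²)` and `∑_{j<i} j = (i² - i)/2`, the exponent
`i²/(2s) + ∑_{j<i} log (1 - j/s)` is `i/(2s) + O(i³/s²)`, which is `O(s^{-1/8})` when
`i ≤ s^{5/8}`; then `|eˣ - 1| ≤ 2|x|` for `|x| ≤ 1`. Writing `t = s^{1/8}` turns all the
exponents into integers. -/

open Real

/-- Poisson(κ) probability mass function. -/
noncomputable def poissonPMF (κ : ℝ) (i : ℕ) : ℝ :=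
  Real.exp (-κ) * κ ^ i / (Nat.factorial i)

open Finset

lemma poissonPMF_sub_div_poissonPMF {κ : ℝ} (hκ : κ ≠ 0) {n i : ℕ} (hi : i ≤ n) :
    poissonPMF κ (n - i) / poissonPMF κ n = n.descFactorial i / κ ^ i := by
  rw [poissonPMF, poissonPMF, ← Nat.factorial_mul_descFactorial hi, ← pow_sub_mul_pow κ hi]
  have := (n - i).factorial_pos
  field_simp
  push_cast
  ring

lemma descFactorial_div_pow_self {K : Type*} [Field K] [CharZero K] {n i : ℕ} (hi : i ≤ n) :
    (n.descFactorial i : K) / (n : K) ^ i = ∏ j ∈ range i, (1 - (j : K) / n) := by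
  rw [Nat.descFactorial_eq_prod_range, Nat.cast_prod, pow_eq_prod_const, ← prod_div_distrib]
  refine prod_congr rfl fun j hj => ?_
  have hjn : j < n := (mem_range.mp hj).trans_le hi
  have hn : (n : K) ≠ 0 := by exact_mod_cast (j.zero_le.trans_lt hjn).ne'
  rw [Nat.cast_sub hjn.le]
  field_simp

lemma sum_range_cast_id (n : ℕ) : ∑ j ∈ range n, (j : ℝ) = ((n : ℝ) ^ 2 - n) / 2 := by
  induction n with
  | zero => simp
  | succ n ih => rw [sum_range_succ, ih]; push_cast; ring

lemma abs_add_log_one_sub_le {x : ℝ} (hx : |x| ≤ 1 / 2) : |x + log (1 - x)| ≤ 2 * x ^ 2 := by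
  have h := abs_log_sub_add_sum_range_le (hx.trans_lt (by norm_num)) 1
  simp only [range_one, sum_singleton, zero_add, pow_one, Nat.cast_zero, div_one] at h
  calc |x + log (1 - x)| ≤ |x| ^ 2 / (1 - |x|) := h
    _ ≤ 2 * x ^ 2 := by
      rw [div_le_iff₀ (by linarith), sq_abs]
      nlinarith [sq_nonneg x]

lemma abs_sq_div_add_sum_log_one_sub_le {s : ℝ} (hs : 0 < s) {i : ℕ} (hi : 2 * i ≤ s) :
    |i ^ 2 / (2 * s) + ∑ j ∈ range i, log (1 - j / s)| ≤ i / (2 * s) + 2 * i ^ 3 / s ^ 2 := by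
  have hratio : ∀ j ∈ range i, |(j : ℝ) / s| ≤ 1 / 2 := fun j hj => by
    have : (j : ℝ) ≤ i := by exact_mod_cast (mem_range.mp hj).le
    rw [abs_of_nonneg (by positivity), div_le_iff₀ hs]
    linarith
  have hremainder : |∑ j ∈ range i, ((j : ℝ) / s + log (1 - j / s))| ≤ 2 * i ^ 3 / s ^ 2 :=
    calc |∑ j ∈ range i, ((j : ℝ) / s + log (1 - j / s))|
        ≤ ∑ j ∈ range i, 2 * ((j : ℝ) / s) ^ 2 :=
          (abs_sum_le_sum_abs _ _).trans
            (sum_le_sum fun j hj => abs_add_log_one_sub_le (hratio j hj))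
      _ ≤ ∑ _j ∈ range i, 2 * ((i : ℝ) / s) ^ 2 := by
          gcongr with j hj
          exact_mod_cast (mem_range.mp hj).le
      _ = 2 * i ^ 3 / s ^ 2 := by
          rw [sum_const, card_range, nsmul_eq_mul]
          field_simp
  have hsplit : (i : ℝ) ^ 2 / (2 * s) + ∑ j ∈ range i, log (1 - j / s)
      = i / (2 * s) + ∑ j ∈ range i, ((j : ℝ) / s + log (1 - j / s)) := by
    rw [sum_add_distrib, ← sum_div, sum_range_cast_id]
    field_simp
    ring
  rw [hsplit]
  refine (abs_add_le _ _).trans ?_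
  rw [abs_of_nonneg (by positivity)]
  linarith

lemma abs_exp_sq_div_mul_prod_one_sub_sub_one_le {s : ℝ} (hs : 0 < s) {i : ℕ} (hi : 2 * i ≤ s)
    (hsmall : i / (2 * s) + 2 * i ^ 3 / s ^ 2 ≤ 1) :
    |exp (i ^ 2 / (2 * s)) * ∏ j ∈ range i, (1 - j / s) - 1|
      ≤ 2 * (i / (2 * s) + 2 * i ^ 3 / s ^ 2) := by
  have hpos : ∀ j ∈ range i, 0 < 1 - (j : ℝ) / s := fun j hj => by
    have : (j : ℝ) ≤ i := by exact_mod_cast (mem_range.mp hj).le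
    rw [sub_pos, div_lt_one hs]
    linarith
  rw [← prod_congr rfl fun j hj => exp_log (hpos j hj), ← exp_sum, ← exp_add]
  have hlog := abs_sq_div_add_sum_log_one_sub_le hs hi
  exact (abs_exp_sub_one_le (hlog.trans hsmall)).trans (by gcongr)

lemma div_two_mul_pow_eight_add_le_of_le_pow_five {t x : ℝ} (ht : 1 ≤ t) (hx0 : 0 ≤ x)
    (hx : x ≤ t ^ 5) :
    x / (2 * t ^ 8) + 2 * x ^ 3 / (t ^ 8) ^ 2 ≤ 5 / 2 * t⁻¹ := by
  have ht0 : 0 < t := by linarith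
  calc x / (2 * t ^ 8) + 2 * x ^ 3 / (t ^ 8) ^ 2
      ≤ t ^ 5 / (2 * t ^ 8) + 2 * (t ^ 5) ^ 3 / (t ^ 8) ^ 2 := by gcongr
    _ = 1 / (2 * t ^ 3) + 2 / t := by field_simp
    _ ≤ 1 / (2 * t) + 2 / t := by gcongr; exact le_self_pow₀ ht (by norm_num)
    _ = 5 / 2 * t⁻¹ := by field_simp; ring

theorem poisson_local_clt :
    ∃ C > (0 : ℝ), ∃ s₀ : ℕ, ∀ s : ℕ, s₀ ≤ s → ∀ i : ℕ,
      (i : ℝ) ≤ (s : ℝ) ^ ((5 : ℝ) / 8) →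
      |Real.exp ((i : ℝ) ^ 2 / (2 * s)) * poissonPMF s (s - i) / poissonPMF s s - 1|
        ≤ C * (s : ℝ) ^ (-(1 : ℝ) / 8) := by
  refine ⟨5, by norm_num, 3 ^ 8, fun s hs i hi => ?_⟩
  set t : ℝ := (s : ℝ) ^ ((1 : ℝ) / 8)
  have hpow (k : ℤ) : (s : ℝ) ^ ((k : ℝ) / 8) = t ^ k := by
    rw [div_eq_mul_one_div, mul_comm, rpow_mul s.cast_nonneg, rpow_intCast]
  have hst : (s : ℝ) = t ^ 8 := by simpa using hpow 8
  have hit : (i : ℝ) ≤ t ^ 5 := by simpa using hi.trans_eq (hpow 5)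
  have hts : (s : ℝ) ^ (-(1 : ℝ) / 8) = t⁻¹ := by simpa [neg_div] using hpow (-1)
  have ht : 3 ≤ t := le_of_pow_le_pow_left₀ (n := 8) (by norm_num) (by positivity)
    (by rw [← hst]; exact_mod_cast hs)
  have htinv : t⁻¹ ≤ 1 / 3 := by rw [inv_le_comm₀ (by linarith) (by norm_num)]; linarith
  have h2i : 2 * (i : ℝ) ≤ s :=
    calc 2 * (i : ℝ) ≤ t ^ 3 * t ^ 5 := by
          gcongr
          linarith [le_self_pow₀ (by linarith : 1 ≤ t) three_ne_zero]
      _ = s := by rw [hst]; ring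
  have his : i ≤ s := by exact_mod_cast (by linarith : (i : ℝ) ≤ s)
  have hsmall : (i : ℝ) / (2 * s) + 2 * i ^ 3 / (s : ℝ) ^ 2 ≤ 5 / 2 * t⁻¹ := by
    rw [hst]; exact div_two_mul_pow_eight_add_le_of_le_pow_five (by linarith) i.cast_nonneg hit
  rw [mul_div_assoc, poissonPMF_sub_div_poissonPMF (by positivity) his,
    descFactorial_div_pow_self his, hts]
  calc _ ≤ 2 * ((i : ℝ) / (2 * s) + 2 * i ^ 3 / (s : ℝ) ^ 2) :=
        abs_exp_sq_div_mul_prod_one_sub_sub_one_le (by positivity) h2i (by linarith)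
    _ ≤ 5 * t⁻¹ := by linarith
end
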